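/- Let 0 ≤ θ₀ < θ ≤ 1 and m > 1, let a ≥ 0 be measurable on (0,∞), and suppose the symmetric measurable kernel k satisfies hypothesis (K1b): 0 ≤ k(x,y) ≤ K_*·[ℓ(x)(y+y^m) + ℓ(y)(x+x^m)]/(x+y+(x+y)^m) for all x,y > 0 and some K_* > 0. Then for all ψ, φ ∈ Y one has ‖K(ψ,φ)‖_{E₀} ≤ (3K_*/2)·(‖ψ‖_Y·‖φ‖_{E₀} + ‖ψ‖_{E₀}·‖φ‖_Y). -/

import Mathlib

open MeasureTheory Set Real
open scoped ENNReal

/-- The weight `ℓ`: `ℓ(x) = x^(1-2θ₀)` for `x ∈ (0,1)` and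
`ℓ(x) = (1+a(x))^θ · x^m` for `x > 1`. -/
noncomputable def ell (a : ℝ → ℝ) (θ₀ θ m : ℝ) (x : ℝ) : ℝ :=
  if x < 1 then x ^ (1 - 2 * θ₀) else (1 + a x) ^ θ * x ^ m

/-- The coagulation operator
`K(ψ,φ)(x) = (1/2)∫₀^x k(y, x−y)ψ(y)φ(x−y) dy − ψ(x)∫₀^∞ k(x,y)φ(y) dy`. -/
noncomputable def coagOp (k : ℝ → ℝ → ℝ) (ψ φ : ℝ → ℝ) (x : ℝ) : ℝ :=
  (1 / 2) * (∫ y in Ioo 0 x, k y (x - y) * ψ y * φ (x - y))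
    - ψ x * ∫ y in Ioi (0 : ℝ), k x y * φ y


lemma ofReal_abs_integral_le {α : Type*} [MeasurableSpace α] (μ : Measure α) (f : α → ℝ) :
    ENNReal.ofReal |∫ x, f x ∂μ| ≤ ∫⁻ x, ENNReal.ofReal |f x| ∂μ := by
  by_cases hf : Integrable f μ
  · calc ENNReal.ofReal |∫ x, f x ∂μ| ≤ ENNReal.ofReal (∫ x, |f x| ∂μ) := by
          apply ENNReal.ofReal_le_ofReal
          simpa [Real.norm_eq_abs] using norm_integral_le_integral_norm f
    _ = ∫⁻ x, ENNReal.ofReal |f x| ∂μ := by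
          exact ofReal_integral_eq_lintegral_ofReal hf.abs
            (Filter.Eventually.of_forall fun x => abs_nonneg _)
  · simp [integral_undef hf]

lemma lintegral_Ioi_shift (y : ℝ) (h : ℝ → ℝ≥0∞) :
    (∫⁻ x in Ioi y, h (x - y)) = ∫⁻ z in Ioi (0:ℝ), h z := by
  rw [← lintegral_indicator measurableSet_Ioi, ← lintegral_indicator measurableSet_Ioi,
    ← lintegral_add_right_eq_self (fun x => (Ioi y).indicator (fun x => h (x - y)) x) y]
  apply lintegral_congr; intro z
  simp only [indicator_apply, mem_Ioi]
  by_cases hz : 0 < z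
  · rw [if_pos hz, if_pos (by linarith)]
    simp
  · rw [if_neg hz, if_neg (by intro hc; exact hz (by linarith))]

lemma lintegral_Ioo_convolution (g : ℝ → ℝ → ℝ≥0∞)
    (hg : Measurable (Function.uncurry g)) :
    (∫⁻ x in Ioi (0:ℝ), ∫⁻ y in Ioo 0 x, g y (x - y)) =
      ∫⁻ y in Ioi (0:ℝ), ∫⁻ z in Ioi (0:ℝ), g y z := by
  have hS : MeasurableSet {p : ℝ × ℝ | 0 < p.2 ∧ p.2 < p.1} := by
    apply MeasurableSet.inter
    · exact measurable_snd measurableSet_Ioi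
    · exact measurableSet_lt measurable_snd measurable_fst
  have hfm : Measurable fun p : ℝ × ℝ => g p.2 (p.1 - p.2) :=
    hg.comp (measurable_snd.prodMk (measurable_fst.sub measurable_snd))
  set H : ℝ → ℝ → ℝ≥0∞ := fun x y => if 0 < y ∧ y < x then g y (x - y) else 0 with hH
  have hHm : Measurable (Function.uncurry H) := by
    have : Function.uncurry H =
        fun p : ℝ × ℝ => if 0 < p.2 ∧ p.2 < p.1 then g p.2 (p.1 - p.2) else 0 := rfl
    rw [this]
    exact Measurable.ite hS hfm measurable_const
  have hHmx : ∀ x, Measurable fun y => H x y := fun x =>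
    hHm.comp (measurable_const.prodMk measurable_id)
  have hHmy : ∀ y, Measurable fun x => H x y := fun y =>
    hHm.comp (measurable_id.prodMk measurable_const)
  have h1 : (∫⁻ x in Ioi (0:ℝ), ∫⁻ y in Ioo 0 x, g y (x - y)) = ∫⁻ x, ∫⁻ y, H x y := by
    rw [← lintegral_indicator measurableSet_Ioi]
    apply lintegral_congr; intro x
    rw [indicator_apply]
    by_cases hx : x ∈ Ioi (0:ℝ)
    · rw [if_pos hx, ← lintegral_indicator measurableSet_Ioo]
      apply lintegral_congr; intro y
      simp only [hH, indicator_apply, mem_Ioo]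
    · rw [if_neg hx]
      symm
      rw [lintegral_eq_zero_iff (hHmx x)]
      refine Filter.Eventually.of_forall fun y => ?_
      simp only [mem_Ioi, not_lt] at hx
      simp only [hH]
      exact if_neg (fun hc => absurd (lt_trans hc.1 hc.2) (not_lt.2 hx))
  have h2 : (∫⁻ x, ∫⁻ y, H x y) = ∫⁻ y, ∫⁻ x, H x y :=
    lintegral_lintegral_swap hHm.aemeasurable
  have h3 : (∫⁻ y, ∫⁻ x, H x y) = ∫⁻ y in Ioi (0:ℝ), ∫⁻ z in Ioi (0:ℝ), g y z := by
    rw [← lintegral_indicator measurableSet_Ioi]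
    apply lintegral_congr; intro y
    rw [indicator_apply]
    by_cases hy : y ∈ Ioi (0:ℝ)
    · rw [if_pos hy, ← lintegral_Ioi_shift y (g y), ← lintegral_indicator measurableSet_Ioi]
      apply lintegral_congr; intro x
      simp only [mem_Ioi] at hy
      by_cases hx : y < x
      · simp [hH, indicator_apply, mem_Ioi, hy, hx]
      · simp [hH, indicator_apply, mem_Ioi, hx]
    · rw [if_neg hy]
      rw [lintegral_eq_zero_iff (hHmy y)]
      refine Filter.Eventually.of_forall fun x => ?_
      simp only [mem_Ioi] at hy
      simp only [hH]
      exact if_neg (fun hc => hy hc.1)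
  rw [h1, h2, h3]

lemma coag_aux (w L : ℝ → ℝ) (Kstar : ℝ) (k : ℝ → ℝ → ℝ) (ψ φ : ℝ → ℝ)
    (hw_meas : Measurable w) (hL_meas : Measurable L)
    (hψm : Measurable ψ) (hφm : Measurable φ)
    (hk : Measurable (Function.uncurry k))
    (hknn : ∀ x y : ℝ, 0 < x → 0 < y → 0 ≤ k x y)
    (hKstar : 0 < Kstar)
    (hw0 : ∀ x ∈ Ioi (0:ℝ), 0 ≤ w x) (hL0 : ∀ x ∈ Ioi (0:ℝ), 0 ≤ L x)
    (hwL : ∀ x ∈ Ioi (0:ℝ), w x ≤ 2 * L x)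
    (hkey1 : ∀ x y : ℝ, 0 < x → 0 < y → w (x + y) * k x y ≤ Kstar * (L x * w y + L y * w x))
    (hkey2 : ∀ x y : ℝ, 0 < x → 0 < y → w x * k x y ≤ Kstar * (L x * w y + L y * w x))
    (hψY : IntegrableOn (fun x => L x * |ψ x|) (Ioi 0))
    (hφY : IntegrableOn (fun x => L x * |φ x|) (Ioi 0)) :
    IntegrableOn (fun x => w x *
        |(1 / 2) * (∫ y in Ioo 0 x, k y (x - y) * ψ y * φ (x - y))
          - ψ x * ∫ y in Ioi (0 : ℝ), k x y * φ y|) (Ioi 0) ∧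
      (∫ x in Ioi (0 : ℝ), w x *
        |(1 / 2) * (∫ y in Ioo 0 x, k y (x - y) * ψ y * φ (x - y))
          - ψ x * ∫ y in Ioi (0 : ℝ), k x y * φ y|) ≤
        (3 * Kstar / 2) *
          ((∫ x in Ioi (0 : ℝ), L x * |ψ x|) * (∫ x in Ioi (0 : ℝ), w x * |φ x|) +
            (∫ x in Ioi (0 : ℝ), w x * |ψ x|) * (∫ x in Ioi (0 : ℝ), L x * |φ x|)) := by
  have hIoi : MeasurableSet (Ioi (0:ℝ)) := measurableSet_Ioi
  set W : ℝ → ℝ≥0∞ := fun x => ENNReal.ofReal (w x) with hW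
  set Lf : ℝ → ℝ≥0∞ := fun x => ENNReal.ofReal (L x) with hLf
  set Ψ : ℝ → ℝ≥0∞ := fun x => ENNReal.ofReal |ψ x| with hΨ
  set Φ : ℝ → ℝ≥0∞ := fun x => ENNReal.ofReal |φ x| with hΦ
  set KS : ℝ≥0∞ := ENNReal.ofReal Kstar with hKS
  have hWm : Measurable W := hw_meas.ennreal_ofReal
  have hLfm : Measurable Lf := hL_meas.ennreal_ofReal
  have hΨm : Measurable Ψ := hψm.abs.ennreal_ofReal
  have hΦm : Measurable Φ := hφm.abs.ennreal_ofReal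
  -- integrability of weighted-w versions
  have hwint : ∀ (f : ℝ → ℝ), Measurable f → IntegrableOn (fun x => L x * |f x|) (Ioi 0) →
      IntegrableOn (fun x => w x * |f x|) (Ioi 0) := by
    intro f hf hLint
    refine Integrable.mono (hLint.const_mul 2) ((hw_meas.mul hf.abs).aestronglyMeasurable) ?_
    refine ae_restrict_of_forall_mem hIoi fun x hx => ?_
    have h1 : 0 ≤ w x * |f x| := mul_nonneg (hw0 x hx) (abs_nonneg _)
    have h2 : w x * |f x| ≤ 2 * (L x * |f x|) := by
      have := mul_le_mul_of_nonneg_right (hwL x hx) (abs_nonneg (f x))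
      nlinarith
    have h3 : 0 ≤ 2 * (L x * |f x|) := le_trans h1 h2
    simp only [Real.norm_eq_abs, abs_of_nonneg h1, abs_of_nonneg h3]
    exact h2
  have hψW : IntegrableOn (fun x => w x * |ψ x|) (Ioi 0) := hwint ψ hψm hψY
  have hφW : IntegrableOn (fun x => w x * |φ x|) (Ioi 0) := hwint φ hφm hφY
  -- lintegral norms
  set NψL := ∫⁻ x in Ioi (0:ℝ), Lf x * Ψ x with hNψL
  set NψW := ∫⁻ x in Ioi (0:ℝ), W x * Ψ x with hNψW
  set NφL := ∫⁻ x in Ioi (0:ℝ), Lf x * Φ x with hNφL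
  set NφW := ∫⁻ x in Ioi (0:ℝ), W x * Φ x with hNφW
  have heqgen : ∀ (u f : ℝ → ℝ), (∀ x ∈ Ioi (0:ℝ), 0 ≤ u x) →
      IntegrableOn (fun x => u x * |f x|) (Ioi 0) →
      (∫⁻ x in Ioi (0:ℝ), ENNReal.ofReal (u x) * ENNReal.ofReal |f x|) =
        ENNReal.ofReal (∫ x in Ioi (0:ℝ), u x * |f x|) := by
    intro u f hu hint
    rw [ofReal_integral_eq_lintegral_ofReal hint
      (ae_restrict_of_forall_mem hIoi fun x hx => mul_nonneg (hu x hx) (abs_nonneg _))]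
    exact setLIntegral_congr_fun hIoi (fun x hx =>
      (ENNReal.ofReal_mul (hu x hx)).symm)
  have hNψL_eq : NψL = ENNReal.ofReal (∫ x in Ioi (0:ℝ), L x * |ψ x|) := heqgen L ψ hL0 hψY
  have hNψW_eq : NψW = ENNReal.ofReal (∫ x in Ioi (0:ℝ), w x * |ψ x|) := heqgen w ψ hw0 hψW
  have hNφL_eq : NφL = ENNReal.ofReal (∫ x in Ioi (0:ℝ), L x * |φ x|) := heqgen L φ hL0 hφY
  have hNφW_eq : NφW = ENNReal.ofReal (∫ x in Ioi (0:ℝ), w x * |φ x|) := heqgen w φ hw0 hφW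
  have hNφL_ne : NφL ≠ ⊤ := by rw [hNφL_eq]; exact ENNReal.ofReal_ne_top
  have hNφW_ne : NφW ≠ ⊤ := by rw [hNφW_eq]; exact ENNReal.ofReal_ne_top
  -- pointwise ENNReal key bounds
  have hkeyE : ∀ (hk' : ∀ x y : ℝ, 0 < x → 0 < y → w (x+y) * k x y ≤ Kstar * (L x * w y + L y * w x))
      (x y : ℝ), 0 < x → 0 < y →
      ENNReal.ofReal (w (x+y)) * ENNReal.ofReal (k x y) ≤ KS * (Lf x * W y + Lf y * W x) := by
    intro hk' x y hx hy
    rw [← ENNReal.ofReal_mul (hw0 (x+y) (by exact add_pos hx hy))]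
    calc ENNReal.ofReal (w (x+y) * k x y) ≤
        ENNReal.ofReal (Kstar * (L x * w y + L y * w x)) :=
          ENNReal.ofReal_le_ofReal (hk' x y hx hy)
      _ = KS * (Lf x * W y + Lf y * W x) := by
          rw [ENNReal.ofReal_mul hKstar.le,
            ENNReal.ofReal_add (mul_nonneg (hL0 x hx) (hw0 y hy)) (mul_nonneg (hL0 y hy) (hw0 x hx)),
            ENNReal.ofReal_mul (hL0 x hx), ENNReal.ofReal_mul (hL0 y hy)]
  have hkey1' : ∀ x y : ℝ, 0 < x → 0 < y →
      ENNReal.ofReal (w (x+y)) * ENNReal.ofReal (k x y) ≤ KS * (Lf x * W y + Lf y * W x) :=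
    hkeyE hkey1
  have hkey2' : ∀ x y : ℝ, 0 < x → 0 < y →
      W x * ENNReal.ofReal (k x y) ≤ KS * (Lf x * W y + Lf y * W x) := by
    intro x y hx hy
    have := hkeyE (fun x y hx hy => le_trans
      (mul_le_mul_of_nonneg_right (le_refl (w (x+y))) (hknn x y hx hy)) (hkey1 x y hx hy)) x y hx hy
    calc W x * ENNReal.ofReal (k x y) = ENNReal.ofReal (w x * k x y) := by
          rw [ENNReal.ofReal_mul (hw0 x hx)]
      _ ≤ ENNReal.ofReal (Kstar * (L x * w y + L y * w x)) :=
          ENNReal.ofReal_le_ofReal (hkey2 x y hx hy)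
      _ = KS * (Lf x * W y + Lf y * W x) := by
          rw [ENNReal.ofReal_mul hKstar.le,
            ENNReal.ofReal_add (mul_nonneg (hL0 x hx) (hw0 y hy)) (mul_nonneg (hL0 y hy) (hw0 x hx)),
            ENNReal.ofReal_mul (hL0 x hx), ENNReal.ofReal_mul (hL0 y hy)]
  -- the inner integrals
  set I2 : ℝ → ℝ≥0∞ := fun x => ∫⁻ y in Ioi (0:ℝ), ENNReal.ofReal (k x y) * Φ y with hI2
  have hI2m : Measurable I2 := by
    apply Measurable.lintegral_prod_right (f := fun x y => ENNReal.ofReal (k x y) * Φ y)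
    exact (hk.ennreal_ofReal.mul (hΦm.comp measurable_snd))
  set I1 : ℝ → ℝ≥0∞ := fun x => ∫⁻ y,
      (if 0 < y ∧ y < x then ENNReal.ofReal (k y (x - y)) * Ψ y * Φ (x - y) else 0) with hI1
  have hS : MeasurableSet {p : ℝ × ℝ | 0 < p.2 ∧ p.2 < p.1} :=
    (measurable_snd measurableSet_Ioi).inter (measurableSet_lt measurable_snd measurable_fst)
  have hI1m : Measurable I1 := by
    apply Measurable.lintegral_prod_right
      (f := fun x y => if 0 < y ∧ y < x then ENNReal.ofReal (k y (x - y)) * Ψ y * Φ (x - y) else 0)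
    apply Measurable.ite hS
    · exact ((hk.comp ((measurable_snd.prodMk (measurable_fst.sub measurable_snd)))).ennreal_ofReal.mul
        (hΨm.comp measurable_snd)).mul (hΦm.comp (measurable_fst.sub measurable_snd))
    · exact measurable_const
  have hI1eq : ∀ x : ℝ, I1 x =
      ∫⁻ y in Ioo 0 x, ENNReal.ofReal (k y (x - y)) * Ψ y * Φ (x - y) := by
    intro x
    rw [hI1]
    rw [← lintegral_indicator measurableSet_Ioo]
    exact lintegral_congr fun y => by simp [indicator_apply, mem_Ioo]
  -- bound for the second term
  have hP2 : (∫⁻ x in Ioi (0:ℝ), W x * Ψ x * I2 x) ≤ KS * (NψL * NφW + NψW * NφL) := by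
    have hpt : ∀ x ∈ Ioi (0:ℝ), W x * Ψ x * I2 x ≤
        Ψ x * (KS * (Lf x * NφW + W x * NφL)) := by
      intro x hx
      have hx' : (0:ℝ) < x := hx
      have step1 : W x * I2 x ≤ KS * (Lf x * NφW + W x * NφL) := by
        calc W x * I2 x = ∫⁻ y in Ioi (0:ℝ), W x * (ENNReal.ofReal (k x y) * Φ y) :=
              (lintegral_const_mul' _ _ ENNReal.ofReal_ne_top).symm
          _ ≤ ∫⁻ y in Ioi (0:ℝ), KS * (Lf x * (W y * Φ y) + W x * (Lf y * Φ y)) := by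
              refine lintegral_mono_ae (ae_restrict_of_forall_mem hIoi fun y hy => ?_)
              have hy' : (0:ℝ) < y := hy
              calc W x * (ENNReal.ofReal (k x y) * Φ y)
                  = (W x * ENNReal.ofReal (k x y)) * Φ y := by ring
                _ ≤ (KS * (Lf x * W y + Lf y * W x)) * Φ y :=
                    mul_le_mul_left (hkey2' x y hx' hy') _
                _ = KS * (Lf x * (W y * Φ y) + W x * (Lf y * Φ y)) := by ring
          _ = KS * (Lf x * NφW + W x * NφL) := by
              rw [lintegral_const_mul' KS _ ENNReal.ofReal_ne_top,
                lintegral_add_left (f := fun a => Lf x * (W a * Φ a)) ((measurable_const.mul (hWm.mul hΦm))),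
                lintegral_const_mul' (Lf x) _ ENNReal.ofReal_ne_top,
                lintegral_const_mul' (W x) _ ENNReal.ofReal_ne_top]
      calc W x * Ψ x * I2 x = Ψ x * (W x * I2 x) := by ring
        _ ≤ Ψ x * (KS * (Lf x * NφW + W x * NφL)) := mul_le_mul_right step1 _
    calc (∫⁻ x in Ioi (0:ℝ), W x * Ψ x * I2 x)
        ≤ ∫⁻ x in Ioi (0:ℝ), Ψ x * (KS * (Lf x * NφW + W x * NφL)) :=
          lintegral_mono_ae (ae_restrict_of_forall_mem hIoi hpt)
      _ = ∫⁻ x in Ioi (0:ℝ), KS * (NφW * (Lf x * Ψ x) + NφL * (W x * Ψ x)) :=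
          lintegral_congr fun x => by ring
      _ = KS * (NφW * NψL + NφL * NψW) := by
          rw [lintegral_const_mul' KS _ ENNReal.ofReal_ne_top,
            lintegral_add_left (f := fun a => NφW * (Lf a * Ψ a)) (measurable_const.mul (hLfm.mul hΨm)),
            lintegral_const_mul' NφW _ hNφW_ne, lintegral_const_mul' NφL _ hNφL_ne]
      _ = KS * (NψL * NφW + NψW * NφL) := by ring
  -- bound for the first term
  have hP1 : (∫⁻ x in Ioi (0:ℝ), W x * I1 x) ≤ KS * (NψL * NφW + NψW * NφL) := by
    have step1 : (∫⁻ x in Ioi (0:ℝ), W x * I1 x) =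
        ∫⁻ y in Ioi (0:ℝ), ∫⁻ z in Ioi (0:ℝ),
          ENNReal.ofReal (w (y + z)) * (ENNReal.ofReal (k y z) * Ψ y * Φ z) := by
      rw [← lintegral_Ioo_convolution
        (fun y z => ENNReal.ofReal (w (y + z)) * (ENNReal.ofReal (k y z) * Ψ y * Φ z))
        (by
          refine Measurable.mul (f := fun p : ℝ × ℝ => ENNReal.ofReal (w (p.1 + p.2)))
            (g := fun p : ℝ × ℝ => ENNReal.ofReal (k p.1 p.2) * Ψ p.1 * Φ p.2) ?_ ?_
          · exact (hw_meas.comp (measurable_fst.add measurable_snd)).ennreal_ofReal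
          · exact (hk.ennreal_ofReal.mul (hΨm.comp measurable_fst)).mul
              (hΦm.comp measurable_snd))]
      apply lintegral_congr; intro x
      rw [hI1eq x, ← lintegral_const_mul' (ENNReal.ofReal (w x)) _ ENNReal.ofReal_ne_top]
      refine setLIntegral_congr_fun measurableSet_Ioo
        (fun y hy => ?_)
      have h : y + (x - y) = x := by ring
      rw [h]
    rw [step1]
    calc (∫⁻ y in Ioi (0:ℝ), ∫⁻ z in Ioi (0:ℝ),
          ENNReal.ofReal (w (y + z)) * (ENNReal.ofReal (k y z) * Ψ y * Φ z))
        ≤ ∫⁻ y in Ioi (0:ℝ), ∫⁻ z in Ioi (0:ℝ),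
            KS * ((Lf y * Ψ y) * (W z * Φ z) + (W y * Ψ y) * (Lf z * Φ z)) := by
          refine lintegral_mono_ae (ae_restrict_of_forall_mem hIoi fun y hy => ?_)
          refine lintegral_mono_ae (ae_restrict_of_forall_mem hIoi fun z hz => ?_)
          have hy' : (0:ℝ) < y := hy
          have hz' : (0:ℝ) < z := hz
          calc ENNReal.ofReal (w (y + z)) * (ENNReal.ofReal (k y z) * Ψ y * Φ z)
              = (ENNReal.ofReal (w (y + z)) * ENNReal.ofReal (k y z)) * (Ψ y * Φ z) := by ring
            _ ≤ (KS * (Lf y * W z + Lf z * W y)) * (Ψ y * Φ z) :=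
                mul_le_mul_left (hkey1' y z hy' hz') _
            _ = KS * ((Lf y * Ψ y) * (W z * Φ z) + (W y * Ψ y) * (Lf z * Φ z)) := by ring
      _ = KS * (NψL * NφW + NψW * NφL) := by
          have inner : ∀ y : ℝ, (∫⁻ z in Ioi (0:ℝ),
              KS * ((Lf y * Ψ y) * (W z * Φ z) + (W y * Ψ y) * (Lf z * Φ z))) =
              KS * ((Lf y * Ψ y) * NφW + (W y * Ψ y) * NφL) := by
            intro y
            rw [lintegral_const_mul' KS _ ENNReal.ofReal_ne_top,
              lintegral_add_left (f := fun a => Lf y * Ψ y * (W a * Φ a)) (measurable_const.mul (hWm.mul hΦm)),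
              lintegral_const_mul' (Lf y * Ψ y) _
                (ENNReal.mul_ne_top ENNReal.ofReal_ne_top ENNReal.ofReal_ne_top),
              lintegral_const_mul' (W y * Ψ y) _
                (ENNReal.mul_ne_top ENNReal.ofReal_ne_top ENNReal.ofReal_ne_top)]
          rw [lintegral_congr inner]
          calc (∫⁻ y in Ioi (0:ℝ), KS * ((Lf y * Ψ y) * NφW + (W y * Ψ y) * NφL))
              = ∫⁻ y in Ioi (0:ℝ), KS * (NφW * (Lf y * Ψ y) + NφL * (W y * Ψ y)) :=
                lintegral_congr fun y => by ring
            _ = KS * (NφW * NψL + NφL * NψW) := by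
                rw [lintegral_const_mul' KS _ ENNReal.ofReal_ne_top,
                  lintegral_add_left (f := fun a => NφW * (Lf a * Ψ a)) (measurable_const.mul (hLfm.mul hΨm)),
                  lintegral_const_mul' NφW _ hNφW_ne, lintegral_const_mul' NφL _ hNφL_ne]
            _ = KS * (NψL * NφW + NψW * NφL) := by ring
  -- abbreviations for the real integrals
  set RψL := ∫ x in Ioi (0:ℝ), L x * |ψ x| with hRψL
  set RψW := ∫ x in Ioi (0:ℝ), w x * |ψ x| with hRψW
  set RφL := ∫ x in Ioi (0:ℝ), L x * |φ x| with hRφL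
  set RφW := ∫ x in Ioi (0:ℝ), w x * |φ x| with hRφW
  have hRψL0 : 0 ≤ RψL := setIntegral_nonneg hIoi fun x hx => mul_nonneg (hL0 x hx) (abs_nonneg _)
  have hRψW0 : 0 ≤ RψW := setIntegral_nonneg hIoi fun x hx => mul_nonneg (hw0 x hx) (abs_nonneg _)
  have hRφL0 : 0 ≤ RφL := setIntegral_nonneg hIoi fun x hx => mul_nonneg (hL0 x hx) (abs_nonneg _)
  have hRφW0 : 0 ≤ RφW := setIntegral_nonneg hIoi fun x hx => mul_nonneg (hw0 x hx) (abs_nonneg _)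
  set B : ℝ := RψL * RφW + RψW * RφL with hB
  have hB0 : 0 ≤ B := add_nonneg (mul_nonneg hRψL0 hRφW0) (mul_nonneg hRψW0 hRφL0)
  have hA_eq : NψL * NφW + NψW * NφL = ENNReal.ofReal B := by
    rw [hNψL_eq, hNψW_eq, hNφL_eq, hNφW_eq, ← ENNReal.ofReal_mul hRψL0,
      ← ENNReal.ofReal_mul hRψW0, ← ENNReal.ofReal_add (mul_nonneg hRψL0 hRφW0)
        (mul_nonneg hRψW0 hRφL0)]
  -- pointwise bound for the coagulation operator
  have hpt : ∀ x ∈ Ioi (0:ℝ),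
      ENNReal.ofReal (w x *
        |(1 / 2) * (∫ y in Ioo 0 x, k y (x - y) * ψ y * φ (x - y))
          - ψ x * ∫ y in Ioi (0 : ℝ), k x y * φ y|) ≤
      ENNReal.ofReal (1/2) * (W x * I1 x) + W x * Ψ x * I2 x := by
    intro x hx
    have hx' : (0:ℝ) < x := hx
    set A1 := ∫ y in Ioo 0 x, k y (x - y) * ψ y * φ (x - y) with hA1
    set A2 := ∫ y in Ioi (0:ℝ), k x y * φ y with hA2
    have habs : |(1 / 2) * A1 - ψ x * A2| ≤ (1/2) * |A1| + |ψ x| * |A2| := by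
      calc |(1 / 2) * A1 - ψ x * A2| ≤ |(1/2) * A1| + |ψ x * A2| := abs_sub _ _
        _ = (1/2) * |A1| + |ψ x| * |A2| := by
            rw [abs_mul, abs_mul, abs_of_pos (by norm_num : (0:ℝ) < 1/2)]
    have hA1le : ENNReal.ofReal |A1| ≤ I1 x := by
      rw [hI1eq x, hA1]
      refine le_trans (ofReal_abs_integral_le _ _) (le_of_eq ?_)
      refine setLIntegral_congr_fun measurableSet_Ioo
        (fun y hy => ?_)
      have h1 : (0:ℝ) < y := hy.1
      have h2 : (0:ℝ) < x - y := by have := hy.2; linarith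
      have hk0 := hknn y (x - y) h1 h2
      rw [abs_mul, abs_mul, abs_of_nonneg hk0,
        ENNReal.ofReal_mul (mul_nonneg hk0 (abs_nonneg _)), ENNReal.ofReal_mul hk0]
    have hA2le : ENNReal.ofReal |A2| ≤ I2 x := by
      rw [hA2, hI2]
      refine le_trans (ofReal_abs_integral_le _ _) (le_of_eq ?_)
      refine setLIntegral_congr_fun hIoi (fun y hy => ?_)
      have hk0 := hknn x y hx' hy
      rw [abs_mul, abs_of_nonneg hk0, ENNReal.ofReal_mul hk0]
    calc ENNReal.ofReal (w x * |(1 / 2) * A1 - ψ x * A2|)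
        = W x * ENNReal.ofReal |(1 / 2) * A1 - ψ x * A2| := ENNReal.ofReal_mul (hw0 x hx)
      _ ≤ W x * (ENNReal.ofReal (1/2) * I1 x + Ψ x * I2 x) := by
          refine mul_le_mul_right ?_ _
          calc ENNReal.ofReal |(1 / 2) * A1 - ψ x * A2|
              ≤ ENNReal.ofReal ((1/2) * |A1| + |ψ x| * |A2|) := ENNReal.ofReal_le_ofReal habs
            _ = ENNReal.ofReal (1/2) * ENNReal.ofReal |A1| + Ψ x * ENNReal.ofReal |A2| := by
                rw [ENNReal.ofReal_add (by positivity) (by positivity),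
                  ENNReal.ofReal_mul (by norm_num), ENNReal.ofReal_mul (abs_nonneg _)]
            _ ≤ ENNReal.ofReal (1/2) * I1 x + Ψ x * I2 x :=
                add_le_add (mul_le_mul_right hA1le _) (mul_le_mul_right hA2le _)
      _ = ENNReal.ofReal (1/2) * (W x * I1 x) + W x * Ψ x * I2 x := by ring
  -- main lintegral bound
  have hmain : (∫⁻ x in Ioi (0:ℝ), ENNReal.ofReal (w x *
      |(1 / 2) * (∫ y in Ioo 0 x, k y (x - y) * ψ y * φ (x - y))
        - ψ x * ∫ y in Ioi (0 : ℝ), k x y * φ y|)) ≤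
      ENNReal.ofReal (3 * Kstar / 2 * B) := by
    calc (∫⁻ x in Ioi (0:ℝ), ENNReal.ofReal (w x *
        |(1 / 2) * (∫ y in Ioo 0 x, k y (x - y) * ψ y * φ (x - y))
          - ψ x * ∫ y in Ioi (0 : ℝ), k x y * φ y|))
        ≤ ∫⁻ x in Ioi (0:ℝ), (ENNReal.ofReal (1/2) * (W x * I1 x) + W x * Ψ x * I2 x) :=
          lintegral_mono_ae (ae_restrict_of_forall_mem hIoi hpt)
      _ = ENNReal.ofReal (1/2) * (∫⁻ x in Ioi (0:ℝ), W x * I1 x) +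
            ∫⁻ x in Ioi (0:ℝ), W x * Ψ x * I2 x := by
          rw [lintegral_add_left (f := fun x => ENNReal.ofReal (1/2) * (W x * I1 x)) (((hWm.mul hI1m)).const_mul _),
            lintegral_const_mul' _ _ ENNReal.ofReal_ne_top]
      _ ≤ ENNReal.ofReal (1/2) * (KS * (NψL * NφW + NψW * NφL)) +
            KS * (NψL * NφW + NψW * NφL) :=
          add_le_add (mul_le_mul_right hP1 _) hP2
      _ = ENNReal.ofReal (3 * Kstar / 2 * B) := by
          rw [hA_eq, hKS, ← ENNReal.ofReal_mul hKstar.le, ← ENNReal.ofReal_mul (by norm_num),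
            ← ENNReal.ofReal_add (by positivity) (mul_nonneg hKstar.le hB0)]
          congr 1
          ring
  -- strong measurability of the operator
  have hc1sm : StronglyMeasurable fun x => ∫ y in Ioo 0 x, k y (x - y) * ψ y * φ (x - y) := by
    have heq : (fun x => ∫ y in Ioo 0 x, k y (x - y) * ψ y * φ (x - y)) =
        fun x => ∫ y, (if 0 < y ∧ y < x then k y (x - y) * ψ y * φ (x - y) else 0) := by
      funext x
      rw [← integral_indicator measurableSet_Ioo]
      refine integral_congr_ae (Filter.Eventually.of_forall fun y => ?_)
      simp [indicator_apply, mem_Ioo]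
    rw [heq]
    apply MeasureTheory.StronglyMeasurable.integral_prod_right'
      (f := fun p : ℝ × ℝ => if 0 < p.2 ∧ p.2 < p.1 then k p.2 (p.1 - p.2) * ψ p.2 * φ (p.1 - p.2) else 0)
    exact (Measurable.ite hS
      (((hk.comp (measurable_snd.prodMk (measurable_fst.sub measurable_snd))).mul
        (hψm.comp measurable_snd)).mul (hφm.comp (measurable_fst.sub measurable_snd)))
      measurable_const).stronglyMeasurable
  have hc2sm : StronglyMeasurable fun x => ∫ y in Ioi (0:ℝ), k x y * φ y := by
    apply MeasureTheory.StronglyMeasurable.integral_prod_right'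
      (f := fun p : ℝ × ℝ => k p.1 p.2 * φ p.2)
    exact (hk.mul (hφm.comp measurable_snd)).stronglyMeasurable
  have hcm : Measurable fun x =>
      (1 / 2) * (∫ y in Ioo 0 x, k y (x - y) * ψ y * φ (x - y))
        - ψ x * ∫ y in Ioi (0 : ℝ), k x y * φ y :=
    (hc1sm.measurable.const_mul _).sub (hψm.mul hc2sm.measurable)
  have hFm : Measurable fun x => w x *
      |(1 / 2) * (∫ y in Ioo 0 x, k y (x - y) * ψ y * φ (x - y))
        - ψ x * ∫ y in Ioi (0 : ℝ), k x y * φ y| := hw_meas.mul hcm.abs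
  have hF0 : 0 ≤ᵐ[volume.restrict (Ioi (0:ℝ))] fun x => w x *
      |(1 / 2) * (∫ y in Ioo 0 x, k y (x - y) * ψ y * φ (x - y))
        - ψ x * ∫ y in Ioi (0 : ℝ), k x y * φ y| :=
    ae_restrict_of_forall_mem hIoi fun x hx => mul_nonneg (hw0 x hx) (abs_nonneg _)
  have hint : IntegrableOn (fun x => w x *
      |(1 / 2) * (∫ y in Ioo 0 x, k y (x - y) * ψ y * φ (x - y))
        - ψ x * ∫ y in Ioi (0 : ℝ), k x y * φ y|) (Ioi 0) :=
    ⟨hFm.aestronglyMeasurable,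
      (hasFiniteIntegral_iff_ofReal hF0).2 (lt_of_le_of_lt hmain ENNReal.ofReal_lt_top)⟩
  refine ⟨hint, ?_⟩
  rw [integral_eq_lintegral_of_nonneg_ae hF0 hFm.aestronglyMeasurable]
  calc (∫⁻ x in Ioi (0:ℝ), ENNReal.ofReal (w x *
      |(1 / 2) * (∫ y in Ioo 0 x, k y (x - y) * ψ y * φ (x - y))
        - ψ x * ∫ y in Ioi (0 : ℝ), k x y * φ y|)).toReal
      ≤ (ENNReal.ofReal (3 * Kstar / 2 * B)).toReal :=
        ENNReal.toReal_mono ENNReal.ofReal_ne_top hmain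
    _ = 3 * Kstar / 2 * B := ENNReal.toReal_ofReal (by positivity)
    _ = 3 * Kstar / 2 * (RψL * RφW + RψW * RφL) := by rw [hB]

/-- under hypothesis (K1b), for all `ψ, φ ∈ Y`,
`‖K(ψ,φ)‖_{E₀} ≤ (3K_*/2)(‖ψ‖_Y ‖φ‖_{E₀} + ‖ψ‖_{E₀} ‖φ‖_Y)`. -/
theorem coag_estimate_K1b (a : ℝ → ℝ) (θ₀ θ m Kstar : ℝ) (k : ℝ → ℝ → ℝ)
    (ψ φ : ℝ → ℝ)
    (hθ₀ : 0 ≤ θ₀) (hθ₀θ : θ₀ < θ) (hθ : θ ≤ 1) (hm : 1 < m)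
    (ha : Measurable a) (ha0 : ∀ x ∈ Ioi (0 : ℝ), 0 ≤ a x)
    (hk : Measurable (Function.uncurry k))
    (hksym : ∀ x y : ℝ, 0 < x → 0 < y → k x y = k y x)
    (hknn : ∀ x y : ℝ, 0 < x → 0 < y → 0 ≤ k x y)
    (hKstar : 0 < Kstar)
    (hK1b : ∀ x y : ℝ, 0 < x → 0 < y →
      k x y ≤ Kstar * (ell a θ₀ θ m x * (y + y ^ m) + ell a θ₀ θ m y * (x + x ^ m)) /
        (x + y + (x + y) ^ m))
    (hψm : Measurable ψ) (hφm : Measurable φ)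
    (hψY : IntegrableOn (fun x => ell a θ₀ θ m x * |ψ x|) (Ioi 0))
    (hφY : IntegrableOn (fun x => ell a θ₀ θ m x * |φ x|) (Ioi 0)) :
    IntegrableOn (fun x => (x + x ^ m) * |coagOp k ψ φ x|) (Ioi 0) ∧
      (∫ x in Ioi (0 : ℝ), (x + x ^ m) * |coagOp k ψ φ x|) ≤
        (3 * Kstar / 2) *
          ((∫ x in Ioi (0 : ℝ), ell a θ₀ θ m x * |ψ x|) *
              (∫ x in Ioi (0 : ℝ), (x + x ^ m) * |φ x|) +
            (∫ x in Ioi (0 : ℝ), (x + x ^ m) * |ψ x|) *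
              (∫ x in Ioi (0 : ℝ), ell a θ₀ θ m x * |φ x|)) := by
  have hθpos : 0 ≤ θ := hθ₀.trans hθ₀θ.le
  have hw_meas : Measurable fun x : ℝ => x + x ^ m := by fun_prop
  have hL_meas : Measurable (ell a θ₀ θ m) := by
    unfold ell
    exact Measurable.ite (measurableSet_lt measurable_id measurable_const)
      (by fun_prop) (by fun_prop)
  have hw0 : ∀ x ∈ Ioi (0:ℝ), 0 ≤ x + x ^ m := fun x hx =>
    add_nonneg (le_of_lt hx) (Real.rpow_nonneg (le_of_lt hx) m)
  have hL0 : ∀ x ∈ Ioi (0:ℝ), 0 ≤ ell a θ₀ θ m x := by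
    intro x hx
    unfold ell
    split_ifs with h
    · exact Real.rpow_nonneg (le_of_lt hx) _
    · exact mul_nonneg (Real.rpow_nonneg (by have := ha0 x hx; linarith) _)
        (Real.rpow_nonneg (le_of_lt hx) _)
  have hwL : ∀ x ∈ Ioi (0:ℝ), x + x ^ m ≤ 2 * ell a θ₀ θ m x := by
    intro x hx
    have hx' : (0:ℝ) < x := hx
    unfold ell
    split_ifs with h
    · have hxm : x ^ m ≤ x := by
        simpa [Real.rpow_one] using Real.rpow_le_rpow_of_exponent_ge hx' h.le hm.le
      have hx1 : x ≤ x ^ (1 - 2 * θ₀) := by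
        have := Real.rpow_le_rpow_of_exponent_ge hx' h.le (by linarith : 1 - 2 * θ₀ ≤ 1)
        simpa [Real.rpow_one] using this
      linarith
    · have h1 : (1:ℝ) ≤ x := not_lt.1 h
      have hxm : x ≤ x ^ m := by
        simpa [Real.rpow_one] using Real.rpow_le_rpow_of_exponent_le h1 hm.le
      have hb : (1:ℝ) ≤ 1 + a x := by have := ha0 x hx; linarith
      have h2 : (1:ℝ) ≤ (1 + a x) ^ θ := by
        have := Real.rpow_le_rpow_of_exponent_le hb hθpos
        simpa [Real.rpow_zero] using this
      have h3 : x ^ m ≤ (1 + a x) ^ θ * x ^ m :=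
        le_mul_of_one_le_left (Real.rpow_nonneg (le_of_lt hx') m) h2
      linarith
  have hwmono : ∀ x y : ℝ, 0 < x → 0 < y → x + x ^ m ≤ (x + y) + (x + y) ^ m := by
    intro x y hx hy
    exact add_le_add (by linarith)
      (Real.rpow_le_rpow hx.le (by linarith) (by linarith))
  have hkey1 : ∀ x y : ℝ, 0 < x → 0 < y →
      ((x + y) + (x + y) ^ m) * k x y ≤
        Kstar * (ell a θ₀ θ m x * (y + y ^ m) + ell a θ₀ θ m y * (x + x ^ m)) := by
    intro x y hx hy
    have hxy : (0:ℝ) < x + y := by linarith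
    have hD : (0:ℝ) < (x + y) + (x + y) ^ m :=
      add_pos_of_pos_of_nonneg hxy (Real.rpow_nonneg hxy.le m)
    have h' := (le_div_iff₀ hD).1 (hK1b x y hx hy)
    calc ((x + y) + (x + y) ^ m) * k x y = k x y * ((x + y) + (x + y) ^ m) := mul_comm _ _
      _ ≤ _ := h'
  have hkey2 : ∀ x y : ℝ, 0 < x → 0 < y →
      (x + x ^ m) * k x y ≤
        Kstar * (ell a θ₀ θ m x * (y + y ^ m) + ell a θ₀ θ m y * (x + x ^ m)) :=
    fun x y hx hy => le_trans
      (mul_le_mul_of_nonneg_right (hwmono x y hx hy) (hknn x y hx hy)) (hkey1 x y hx hy)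
  have main := coag_aux (fun x => x + x ^ m) (ell a θ₀ θ m) Kstar k ψ φ
    hw_meas hL_meas hψm hφm hk hknn hKstar hw0 hL0 hwL hkey1 hkey2 hψY hφY
  simpa [coagOp] using main
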